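/- Consider the weighted regularized quantile regression problem: minimize over functions t : 𝒳 → ℝ the objective ∑_{i=1}^n w_i ℓ_α(t(x_i), s_i) + R(t), where w_i ≥ 0 sum to 1 and R is convex. Its Lagrangian dual is: maximize (w ⊙ λ)ᵀ s − R*(w ⊙ λ) subject to −α·1 ⪯ λ ⪯ (1−α)·1, where R*(a) = sup_t {∑_i a_i t(x_i) − R(t)} is the Fenchel conjugate of R along the evaluation functionals and ⊙ denotes the Hadamard product. -/

import Mathlib

/-!
Collecting terms, the Lagrangian at `(t, p, q)` is
`(w ⊙ λ)ᵀ s − (∑ᵢ wᵢλᵢ t(xᵢ) − R t) + ∑ᵢ wᵢ(1 − α − λᵢ) pᵢ + ∑ᵢ wᵢ(α + λᵢ) qᵢ`.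
Its infimum over the slacks `p, q ≥ 0` is the value at `p = q = 0` when all slack coefficients
are nonnegative, which is the box condition, and `−∞` as soon as one of them is negative, which
happens outside the box at a coordinate of positive weight. What remains is an infimum over `t`
of `(w ⊙ λ)ᵀ s` minus the expression whose supremum is `R*(w ⊙ λ)`.
-/

/-- The pinball (quantile) loss at level `α`. -/
noncomputable def pinball (α t s : ℝ) : ℝ := α * max (t - s) 0 + (1 - α) * max (s - t) 0

/-- The Lagrangian dual function of the weighted regularized quantile regression problem
`minimize ∑ᵢ wᵢ ℓ_α(t(xᵢ), sᵢ) + R(t)`, obtained from the slack reformulation with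
`pᵢ = [sᵢ − t(xᵢ)]₊ ≥ 0`, `qᵢ = [t(xᵢ) − sᵢ]₊ ≥ 0` and multipliers `wᵢλᵢ` on the
equality constraints `sᵢ − t(xᵢ) − pᵢ + qᵢ = 0`. -/
noncomputable def lagrangianDual {𝒳 : Type*} (n : ℕ) (x : Fin n → 𝒳) (s : Fin n → ℝ)
    (w : Fin n → ℝ) (α : ℝ) (R : (𝒳 → ℝ) → ℝ) (lam : Fin n → ℝ) : EReal :=
  ⨅ (t : 𝒳 → ℝ) (p : Fin n → ℝ) (q : Fin n → ℝ)
      (_ : ∀ i, 0 ≤ p i) (_ : ∀ i, 0 ≤ q i),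
    ((∑ i, w i * ((1 - α) * p i + α * q i) + R t
        + ∑ i, w i * lam i * (s i - t (x i) - p i + q i) : ℝ) : EReal)

namespace EReal

lemma coe_sub_sub_cancel (a : ℝ) (x : EReal) : (a : EReal) - (a - x) = x := by
  rw [sub_eq_add_neg (a : EReal) x, sub_add_cancel_left, neg_neg]

lemma coe_sub_iSup {ι : Sort*} (a : ℝ) (g : ι → EReal) :
    (a : EReal) - ⨆ i, g i = ⨅ i, ((a : EReal) - g i) := by
  refine le_antisymm (le_iInf fun i => sub_le_sub le_rfl (le_iSup g i)) ?_
  set y := ⨅ i, ((a : EReal) - g i)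
  have hsup : ⨆ i, g i ≤ a - y := iSup_le fun i => by
    rw [← coe_sub_sub_cancel a (g i)]
    exact sub_le_sub le_rfl (iInf_le _ i)
  exact (coe_sub_sub_cancel a y).symm.trans_le (sub_le_sub le_rfl hsup)

end EReal

section Slack

variable {ι : Type*} [Fintype ι]

lemma exists_nonneg_sum_mul_lt {c : ι → ℝ} {j : ι} (hj : c j < 0) (y : ℝ) :
    ∃ p : ι → ℝ, (∀ i, 0 ≤ p i) ∧ ∑ i, c i * p i < y := by
  classical
  refine ⟨Pi.single j ((|y| + 1) / -c j), fun i => ?_, ?_⟩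
  · rcases eq_or_ne i j with rfl | hij
    · rw [Pi.single_eq_same]; exact div_nonneg (by positivity) (neg_nonneg.2 hj.le)
    · rw [Pi.single_eq_of_ne hij]
  · rw [Finset.sum_eq_single_of_mem j (Finset.mem_univ j) fun i _ hij => by
      rw [Pi.single_eq_of_ne hij, mul_zero], Pi.single_eq_same, mul_div_assoc', div_neg,
      mul_div_cancel_left₀ _ hj.ne]
    linarith [neg_abs_le y]

noncomputable def slackInf (b : ℝ) (c d : ι → ℝ) : EReal :=
  ⨅ (p : ι → ℝ) (q : ι → ℝ) (_ : ∀ i, 0 ≤ p i) (_ : ∀ i, 0 ≤ q i),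
    ((b + ∑ i, c i * p i + ∑ i, d i * q i : ℝ) : EReal)

lemma slackInf_le (b : ℝ) (c d : ι → ℝ) {p q : ι → ℝ} (hp : ∀ i, 0 ≤ p i) (hq : ∀ i, 0 ≤ q i) :
    slackInf b c d ≤ ((b + ∑ i, c i * p i + ∑ i, d i * q i : ℝ) : EReal) :=
  iInf_le_of_le p <| iInf_le_of_le q <| iInf_le_of_le hp <| iInf_le _ hq

lemma slackInf_of_nonneg (b : ℝ) {c d : ι → ℝ} (hc : ∀ i, 0 ≤ c i) (hd : ∀ i, 0 ≤ d i) :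
    slackInf b c d = b := by
  refine le_antisymm ?_ ?_
  · simpa using slackInf_le b c d (p := 0) (q := 0) (fun _ => le_rfl) (fun _ => le_rfl)
  · refine le_iInf fun p => le_iInf fun q => le_iInf fun hp => le_iInf fun hq => ?_
    have hP : 0 ≤ ∑ i, c i * p i := Finset.sum_nonneg fun i _ => mul_nonneg (hc i) (hp i)
    have hQ : 0 ≤ ∑ i, d i * q i := Finset.sum_nonneg fun i _ => mul_nonneg (hd i) (hq i)
    exact EReal.coe_le_coe_iff.2 (by linarith)

lemma slackInf_eq_bot (b : ℝ) {c d : ι → ℝ} {j : ι} (hj : c j < 0 ∨ d j < 0) :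
    slackInf b c d = ⊥ := by
  refine (EReal.eq_bot_iff_forall_lt _).2 fun y => ?_
  suffices ∃ p q : ι → ℝ, (∀ i, 0 ≤ p i) ∧ (∀ i, 0 ≤ q i) ∧
      b + ∑ i, c i * p i + ∑ i, d i * q i < y by
    obtain ⟨p, q, hp, hq, hlt⟩ := this
    exact (slackInf_le b c d hp hq).trans_lt (EReal.coe_lt_coe_iff.2 hlt)
  rcases hj with hj | hj
  · obtain ⟨p, hp, hlt⟩ := exists_nonneg_sum_mul_lt hj (y - b)
    exact ⟨p, 0, hp, fun _ => le_rfl, by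
      simp only [Pi.zero_apply, mul_zero, Finset.sum_const_zero]; linarith⟩
  · obtain ⟨q, hq, hlt⟩ := exists_nonneg_sum_mul_lt hj (y - b)
    exact ⟨0, q, fun _ => le_rfl, hq, by
      simp only [Pi.zero_apply, mul_zero, Finset.sum_const_zero]; linarith⟩

end Slack

lemma lagrangianDual_eq_iInf_slackInf {𝒳 : Type*} (n : ℕ) (x : Fin n → 𝒳) (s : Fin n → ℝ)
    (w : Fin n → ℝ) (α : ℝ) (R : (𝒳 → ℝ) → ℝ) (lam : Fin n → ℝ) :
    lagrangianDual n x s w α R lam = ⨅ t : 𝒳 → ℝ,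
      slackInf (∑ i, w i * lam i * s i - (∑ i, w i * lam i * t (x i) - R t))
        (fun i => w i * (1 - α - lam i)) (fun i => w i * (α + lam i)) := by
  refine iInf_congr fun t => iInf_congr fun p => iInf_congr fun q =>
    iInf_congr fun _ => iInf_congr fun _ => congrArg _ ?_
  have hsummand i : w i * ((1 - α) * p i + α * q i) + w i * lam i * (s i - t (x i) - p i + q i)
      = w i * lam i * s i - w i * lam i * t (x i) + w i * (1 - α - lam i) * p i
        + w i * (α + lam i) * q i := by ring
  rw [add_right_comm, ← Finset.sum_add_distrib, Finset.sum_congr rfl fun i _ => hsummand i]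
  simp only [Finset.sum_add_distrib, Finset.sum_sub_distrib]
  ring

theorem weighted_quantile_regression_dual_general
    {𝒳 : Type*} (n : ℕ) (x : Fin n → 𝒳) (s : Fin n → ℝ)
    (w : Fin n → ℝ) (hw : ∀ i, 0 ≤ w i)
    (α : ℝ)
    (R : (𝒳 → ℝ) → ℝ)
    (Rstar : (Fin n → ℝ) → EReal)
    (hRstar : ∀ a : Fin n → ℝ,
      Rstar a = ⨆ t : 𝒳 → ℝ, ((∑ i, a i * t (x i) - R t : ℝ) : EReal)) :
    ∀ lam : Fin n → ℝ,
      ((∀ i, -α ≤ lam i ∧ lam i ≤ 1 - α) →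
        lagrangianDual n x s w α R lam
          = ((∑ i, w i * lam i * s i : ℝ) : EReal) - Rstar (fun i => w i * lam i)) ∧
      ((∃ i, 0 < w i ∧ (lam i < -α ∨ 1 - α < lam i)) →
        lagrangianDual n x s w α R lam = ⊥) := by
  intro lam
  rw [lagrangianDual_eq_iInf_slackInf]
  constructor
  · intro hbox
    have hc i : 0 ≤ w i * (1 - α - lam i) := mul_nonneg (hw i) (by linarith [(hbox i).2])
    have hd i : 0 ≤ w i * (α + lam i) := mul_nonneg (hw i) (by linarith [(hbox i).1])
    simp only [slackInf_of_nonneg _ hc hd, hRstar, EReal.coe_sub_iSup, EReal.coe_sub]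
  · rintro ⟨j, hwj, hj⟩
    have hbot (b : ℝ) :
        slackInf b (fun i => w i * (1 - α - lam i)) (fun i => w i * (α + lam i)) = ⊥ :=
      slackInf_eq_bot b (j := j) <| hj.symm.imp
        (fun h => mul_neg_of_pos_of_neg hwj (by linarith))
        (fun h => mul_neg_of_pos_of_neg hwj (by linarith))
    simp only [hbot, iInf_const]

/-- The Lagrangian dual of the weighted regularized quantile regression problem is
`maximize (w ⊙ λ)ᵀ s − R*(w ⊙ λ)` subject to `−α·1 ⪯ λ ⪯ (1−α)·1`: on the box the dual
function equals `(w ⊙ λ)ᵀ s − R*(w ⊙ λ)` where `R*` is the Fenchel conjugate of `R`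
along the evaluation functionals, and outside the box (at a coordinate with positive
weight) the dual function is `−∞`. -/
theorem weighted_quantile_regression_dual
    {𝒳 : Type*} (n : ℕ) (x : Fin n → 𝒳) (s : Fin n → ℝ)
    (w : Fin n → ℝ) (hw : ∀ i, 0 ≤ w i) (hwsum : ∑ i, w i = 1)
    (α : ℝ) (hα : α ∈ Set.Ioo (0 : ℝ) 1)
    (R : (𝒳 → ℝ) → ℝ) (hR : ConvexOn ℝ Set.univ R)
    (Rstar : (Fin n → ℝ) → EReal)
    (hRstar : ∀ a : Fin n → ℝ,
      Rstar a = ⨆ t : 𝒳 → ℝ, ((∑ i, a i * t (x i) - R t : ℝ) : EReal)) :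
    ∀ lam : Fin n → ℝ,
      ((∀ i, -α ≤ lam i ∧ lam i ≤ 1 - α) →
        lagrangianDual n x s w α R lam
          = ((∑ i, w i * lam i * s i : ℝ) : EReal) - Rstar (fun i => w i * lam i)) ∧
      ((∃ i, 0 < w i ∧ (lam i < -α ∨ 1 - α < lam i)) →
        lagrangianDual n x s w α R lam = ⊥) :=
  weighted_quantile_regression_dual_general n x s w hw α R Rstar hRstar
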